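/- Let A^1,…,A^T be RUM matrices. For each t, let A^{t*} be the matrix obtained from A^t by deleting, in every menu of A^t except the first, one designated row, and assume that each A^{t*} has full row rank. Then for every stable vector ρ, indexed by tuples (r_1,…,r_T)ptr of row indices of A^1,…,A^T, there exists a vector v (not necessarily nonnegative) such that (⊗_{t=1}^T A^t) v = ρ. -/
import Mathlib


open Matrix

noncomputable section

/-- Iterated Kronecker product of a family of matrices, in product-index form:
rows and columns are indexed by tuples of indices, which correspond to the rows
and columns of the iterated Kronecker product via the lexicographic bijection. -/
def kronPi {T : ℕ} {R C : Fin T → Type*} (A : ∀ t, Matrix (R t) (C t) ℝ) :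
    Matrix (∀ t, R t) (∀ t, C t) ℝ :=
  Matrix.of fun r c => ∏ t, A t (r t) (c t)

/-- `A` is a RUM matrix with menus given by the fibers of `menu`: the entries of `A`
lie in `{0,1}`, the menus (fibers of `menu`) are nonempty, and every column has
exactly one entry equal to `1` in each menu. -/
def IsRUMMatrix {Row Col M : Type*} (A : Matrix Row Col ℝ) (menu : Row → M) : Prop :=
  Function.Surjective menu ∧
  (∀ r c, A r c = 0 ∨ A r c = 1) ∧
  (∀ (c : Col) (j : M), ∃! r, menu r = j ∧ A r c = 1)

/-- A vector `ρ` indexed by tuples of rows is stable: for every period `t`, every pair of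
menus `j, j'` of period `t`, and every fixed tuple of rows in the other periods, the sum
of `ρ` over the rows of menu `j` in position `t` equals the sum over the rows of `j'`. -/
def IsStable {T : ℕ} {Row : Fin T → Type*} [∀ t, Fintype (Row t)]
    {M : Fin T → Type*} [∀ t, DecidableEq (M t)]
    (menu : ∀ t, Row t → M t) (ρ : (∀ t, Row t) → ℝ) : Prop :=
  ∀ (t : Fin T) (j j' : M t) (r : ∀ s, Row s),
    ∑ x ∈ Finset.univ.filter (fun x => menu t x = j), ρ (Function.update r t x) =
      ∑ x ∈ Finset.univ.filter (fun x => menu t x = j'), ρ (Function.update r t x)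

/-- `D` is a valid set of deleted rows given a first menu `j₀`: no row of the first menu is
deleted, and exactly one designated row is deleted from every other menu. -/
def IsDeletion {Row M : Type*} (menu : Row → M) (j₀ : M) (D : Finset Row) : Prop :=
  (∀ r ∈ D, menu r ≠ j₀) ∧ ∀ j : M, j ≠ j₀ → ∃! r, r ∈ D ∧ menu r = j

/-! ### Auxiliary lemmas -/

lemma kronPi_mul {T : ℕ} {R K C : Fin T → Type*} [∀ t, Fintype (K t)]
    (A : ∀ t, Matrix (R t) (K t) ℝ) (B : ∀ t, Matrix (K t) (C t) ℝ) :
    kronPi A * kronPi B = kronPi (fun t => A t * B t) := by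
  ext r c
  simp only [Matrix.mul_apply, kronPi, Matrix.of_apply, Matrix.mul_apply]
  rw [Fintype.prod_sum fun t k => A t (r t) k * B t k (c t)]
  simp [Finset.prod_mul_distrib]

lemma kronPi_one {T : ℕ} {R : Fin T → Type*} [∀ t, Fintype (R t)] [∀ t, DecidableEq (R t)] :
    kronPi (fun t => (1 : Matrix (R t) (R t) ℝ)) = 1 := by
  ext r c
  simp only [kronPi, Matrix.of_apply, Matrix.one_apply]
  by_cases h : r = c
  · subst h; simp
  · rw [if_neg h]
    obtain ⟨t, ht⟩ := Function.ne_iff.mp h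
    exact Finset.prod_eq_zero (Finset.mem_univ t) (by simp [Matrix.one_apply, ht])

lemma exists_right_inverse' {Row Col : Type*} [Fintype Row] [Fintype Col] [DecidableEq Row]
    (A : Matrix Row Col ℝ) (h : A.rank = Fintype.card Row) :
    ∃ B : Matrix Col Row ℝ, A * B = 1 := by
  have hsurj : Function.Surjective A.mulVecLin := by
    rw [← LinearMap.range_eq_top]
    apply Submodule.eq_top_of_finrank_eq
    rw [← Matrix.rank, h, Module.finrank_fintype_fun_eq_card]
  choose w hw using fun r : Row => hsurj (Pi.single r (1:ℝ))
  refine ⟨Matrix.of fun c r => w r c, ?_⟩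
  ext r' r
  have : (A.mulVecLin (w r)) r' = (Pi.single r (1:ℝ) : Row → ℝ) r' := by rw [hw r]
  simpa [Matrix.mul_apply, Matrix.mulVecLin, Matrix.mulVec, dotProduct,
    Matrix.one_apply, Pi.single_apply] using this

lemma rum_col_sum {Row Col M : Type*} [Fintype Row] [DecidableEq M]
    (A : Matrix Row Col ℝ) (menu : Row → M) (hA : IsRUMMatrix A menu) (c : Col) (j : M) :
    ∑ x ∈ Finset.univ.filter (fun x => menu x = j), A x c = 1 := by
  obtain ⟨r₀, ⟨hm, h1⟩, huniq⟩ := hA.2.2 c j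
  rw [Finset.sum_eq_single r₀]
  · exact h1
  · intro x hx hne
    rcases hA.2.1 x c with h | h
    · exact h
    · exact absurd (huniq x ⟨(Finset.mem_filter.mp hx).2, h⟩) hne
  · intro h
    exact absurd (Finset.mem_filter.mpr ⟨Finset.mem_univ r₀, hm⟩) h

/-- The sum over a menu of `(kronPi A) *ᵥ v` at updated tuples is menu-independent. -/
lemma mulVec_menu_sum {T : ℕ} {Row Col M : Fin T → Type*}
    [∀ t, Fintype (Row t)] [∀ t, Fintype (Col t)] [∀ t, DecidableEq (M t)]
    (A : ∀ t, Matrix (Row t) (Col t) ℝ) (menu : ∀ t, Row t → M t)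
    (hA : ∀ t, IsRUMMatrix (A t) (menu t)) (v : (∀ t, Col t) → ℝ)
    (t : Fin T) (j : M t) (r : ∀ s, Row s) :
    ∑ x ∈ Finset.univ.filter (fun x => menu t x = j),
        (kronPi A).mulVec v (Function.update r t x) =
      ∑ c, (∏ s ∈ Finset.univ.erase t, A s (r s) (c s)) * v c := by
  simp only [Matrix.mulVec, dotProduct, kronPi, Matrix.of_apply]
  rw [Finset.sum_comm]
  refine Finset.sum_congr rfl fun c _ => ?_
  have hprod : ∀ x : Row t, ∏ s, A s (Function.update r t x s) (c s) =
      A t x (c t) * ∏ s ∈ Finset.univ.erase t, A s (r s) (c s) := by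
    intro x
    rw [← Finset.mul_prod_erase Finset.univ _ (Finset.mem_univ t), Function.update_self]
    congr 1
    refine Finset.prod_congr rfl fun s hs => ?_
    rw [Function.update_of_ne (Finset.ne_of_mem_erase hs)]
  simp only [hprod]
  rw [← Finset.sum_mul, ← Finset.sum_mul, rum_col_sum (A t) (menu t) (hA t) (c t) j, one_mul]

/-- Two stable vectors agreeing on all tuples avoiding the deleted rows agree everywhere;
stated for the difference `δ`. -/
lemma stable_zero {T : ℕ} {Row M : Fin T → Type*}
    [∀ t, Fintype (Row t)] [∀ t, DecidableEq (Row t)] [∀ t, DecidableEq (M t)]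
    (menu : ∀ t, Row t → M t) (j₀ : ∀ t, M t) (D : ∀ t, Finset (Row t))
    (hD : ∀ t, IsDeletion (menu t) (j₀ t) (D t))
    (δ : (∀ t, Row t) → ℝ) (hδ : IsStable menu δ)
    (h0 : ∀ r, (∀ t, r t ∉ D t) → δ r = 0) : ∀ r, δ r = 0 := by
  suffices H : ∀ n (r : ∀ t, Row t),
      (Finset.univ.filter (fun t => r t ∈ D t)).card ≤ n → δ r = 0 by
    intro r; exact H _ r le_rfl
  intro n
  induction n with
  | zero =>
    intro r hr
    refine h0 r fun t ht => ?_
    have hmem : t ∈ Finset.univ.filter (fun t => r t ∈ D t) :=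
      Finset.mem_filter.mpr ⟨Finset.mem_univ t, ht⟩
    rw [Nat.le_zero, Finset.card_eq_zero] at hr
    simp [hr] at hmem
  | succ n ih =>
    intro r hr
    by_cases hall : ∀ t, r t ∉ D t
    · exact h0 r hall
    push_neg at hall
    obtain ⟨t, hmem⟩ := hall
    have hjne : menu t (r t) ≠ j₀ t := (hD t).1 _ hmem
    have htfilter : t ∈ Finset.univ.filter (fun s => r s ∈ D s) :=
      Finset.mem_filter.mpr ⟨Finset.mem_univ t, hmem⟩
    have hcard : ∀ x : Row t, x ∉ D t →
        (Finset.univ.filter (fun s => Function.update r t x s ∈ D s)).card ≤ n := by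
      intro x hx
      have hsub : Finset.univ.filter (fun s => Function.update r t x s ∈ D s) ⊆
          (Finset.univ.filter (fun s => r s ∈ D s)).erase t := by
        intro s hs
        rw [Finset.mem_filter] at hs
        by_cases hst : s = t
        · subst hst
          rw [Function.update_self] at hs
          exact absurd hs.2 hx
        · rw [Function.update_of_ne hst] at hs
          exact Finset.mem_erase.mpr ⟨hst, Finset.mem_filter.mpr hs⟩
      calc (Finset.univ.filter (fun s => Function.update r t x s ∈ D s)).card
          ≤ ((Finset.univ.filter (fun s => r s ∈ D s)).erase t).card :=
            Finset.card_le_card hsub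
        _ = (Finset.univ.filter (fun s => r s ∈ D s)).card - 1 :=
            Finset.card_erase_of_mem htfilter
        _ ≤ n := by omega
    have key := hδ t (menu t (r t)) (j₀ t) r
    have hRHS : ∑ x ∈ Finset.univ.filter (fun x => menu t x = j₀ t),
        δ (Function.update r t x) = 0 := by
      refine Finset.sum_eq_zero fun x hx => ?_
      have hxm := (Finset.mem_filter.mp hx).2
      have hxD : x ∉ D t := fun hxD => (hD t).1 x hxD hxm
      exact ih _ (hcard x hxD)
    have hzero : ∀ x ∈ Finset.univ.filter (fun x => menu t x = menu t (r t)),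
        x ≠ r t → δ (Function.update r t x) = 0 := by
      intro x hx hne
      have hxm := (Finset.mem_filter.mp hx).2
      have hxD : x ∉ D t := by
        intro hxD
        obtain ⟨r', -, huniq⟩ := (hD t).2 (menu t (r t)) hjne
        exact hne ((huniq x ⟨hxD, hxm⟩).trans (huniq (r t) ⟨hmem, rfl⟩).symm)
      exact ih _ (hcard x hxD)
    have hLHS := Finset.sum_eq_single_of_mem
        (s := Finset.univ.filter (fun x => menu t x = menu t (r t)))
        (f := fun x => δ (Function.update r t x)) (r t) (by simp) hzero
    simp only [Function.update_eq_self] at hLHS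
    rw [hLHS, hRHS] at key
    exact key

/-- if each reduced matrix `A^{t*}` (obtained by deleting one designated row
from every menu except the first) has full row rank, then every stable vector `ρ` lies in
the linear span of the columns of `⊗ₜ Aᵗ`: there is `v` with `(⊗ₜ Aᵗ) v = ρ`. -/
theorem stable_mem_span_kron_rum
    (T : ℕ) {Row Col M : Fin T → Type*}
    [∀ t, Fintype (Row t)] [∀ t, Fintype (Col t)]
    [∀ t, DecidableEq (Row t)] [∀ t, DecidableEq (M t)]
    (A : ∀ t, Matrix (Row t) (Col t) ℝ) (menu : ∀ t, Row t → M t)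
    (hA : ∀ t, IsRUMMatrix (A t) (menu t))
    (j₀ : ∀ t, M t) (D : ∀ t, Finset (Row t))
    (hD : ∀ t, IsDeletion (menu t) (j₀ t) (D t))
    (hrank : ∀ t,
      ((A t).submatrix (Subtype.val : {r : Row t // r ∉ D t} → Row t) id).rank =
        Fintype.card {r : Row t // r ∉ D t})
    (ρ : (∀ t, Row t) → ℝ) (hρ : IsStable menu ρ) :
    ∃ v : (∀ t, Col t) → ℝ, (kronPi A).mulVec v = ρ := by
  classical
  set Astar : ∀ t, Matrix {r : Row t // r ∉ D t} (Col t) ℝ :=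
    fun t => (A t).submatrix Subtype.val id with hAstar
  have hBex : ∀ t, ∃ B : Matrix (Col t) {r : Row t // r ∉ D t} ℝ, Astar t * B = 1 :=
    fun t => exists_right_inverse' (Astar t) (hrank t)
  choose B hB using hBex
  set ρstar : (∀ t, {r : Row t // r ∉ D t}) → ℝ := fun r => ρ (fun t => (r t).val) with hρstar
  set v : (∀ t, Col t) → ℝ := (kronPi B).mulVec ρstar with hv_def
  have hv : (kronPi Astar).mulVec v = ρstar := by
    rw [hv_def, Matrix.mulVec_mulVec, kronPi_mul]
    have h1 : (fun t => Astar t * B t) = fun t => (1 : Matrix _ _ ℝ) := funext hB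
    rw [h1, kronPi_one, Matrix.one_mulVec]
  refine ⟨v, ?_⟩
  have hσ : IsStable menu ((kronPi A).mulVec v) := by
    intro t j j' r
    rw [mulVec_menu_sum A menu hA v t j r, mulVec_menu_sum A menu hA v t j' r]
  have hδstable : IsStable menu (fun r => (kronPi A).mulVec v r - ρ r) := by
    intro t j j' r
    simp only [Finset.sum_sub_distrib]
    rw [hσ t j j' r, hρ t j j' r]
  have hδ0 : ∀ r, (∀ t, r t ∉ D t) → (kronPi A).mulVec v r - ρ r = 0 := by
    intro r hr
    have h1 : (kronPi A).mulVec v r =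
        (kronPi Astar).mulVec v (fun t => (⟨r t, hr t⟩ : {x : Row t // x ∉ D t})) := rfl
    rw [h1, hv]
    simp [hρstar]
  have hall := stable_zero menu j₀ D hD _ hδstable hδ0
  funext r
  have h := hall r
  simp only [sub_eq_zero] at h
  exact h

end
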